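/- arXiv:2104.03121 — 7 statements merged into one kernel-verified Lean document; each statement's English description precedes it below -/
import Mathlib

section
/- Let (L : ℬ → 𝒜, R : 𝒜 → ℬ, η, ε) be an adjunction L ⊣ R with R lax monoidal, and let 𝓛 be a left 𝒜-module category (with action ⊙ : 𝒜 × 𝓛 → 𝓛) and 𝓜 a left ℬ-module category, F : 𝓛 → 𝓜 a functor. Then there is a bijection between R-lax structures on F (natural transformations β_{a,x} : R(a) ⊙ F(x) → F(a ⊙ x) compatible with the lax monoidality of R and the module structures) and L-oplax structures on F (natural transformations α_{b,x} : b ⊙ F(x) → F(L(b) ⊙ x) making F a lax module functor for the pulled back ℬ-action), given by α_{b,x} = β_{L(b),x} ∘ (η_b ⊙ 1) and β_{a,x} = F(ε_a ⊙ 1) ∘ α_{R(a),x}. -/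
/-!
STATEMENT 7: Given an adjunction `L ⊣ R` with `R : 𝒜 ⥤ ℬ` lax monoidal, a left `𝒜`-module
category `𝓛` and a left `ℬ`-module category `𝓜`, and a functor `F : 𝓛 ⥤ 𝓜`, there is a
bijection between `R`-lax structures on `F` and `L`-oplax structures on `F`, given by
`α_{b,x} = β_{L(b),x} ∘ (η_b ⊙ 1)` and `β_{a,x} = F(ε_a ⊙ 1) ∘ α_{R(a),x}`.
-/

open CategoryTheory MonoidalCategory CategoryTheory.Functor.LaxMonoidal

namespace Stmt7

/-- A left module category over a monoidal category: an action bifunctor together with a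
(strong) associator and unitor satisfying naturality and coherence. -/
structure LeftModuleStruct (A : Type*) [Category A] [MonoidalCategory A]
    (L : Type*) [Category L] where
  act : A ⥤ L ⥤ L
  assoc : ∀ (a b : A) (x : L), (act.obj (a ⊗ b)).obj x ≅ (act.obj a).obj ((act.obj b).obj x)
  unitor : ∀ x : L, (act.obj (𝟙_ A)).obj x ≅ x
  assoc_natural :
    ∀ {a a' b b' : A} {x x' : L} (f : a ⟶ a') (g : b ⟶ b') (h : x ⟶ x'),
      (act.map (f ⊗ₘ g)).app x ≫ (act.obj (a' ⊗ b')).map h ≫ (assoc a' b' x').hom =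
        (assoc a b x).hom ≫ (act.map f).app _ ≫
          (act.obj a').map ((act.map g).app x ≫ (act.obj b').map h)
  unitor_natural : ∀ {x x' : L} (h : x ⟶ x'),
    (act.obj (𝟙_ A)).map h ≫ (unitor x').hom = (unitor x).hom ≫ h
  pentagon : ∀ (a b c : A) (x : L),
    (act.map (α_ a b c).hom).app x ≫ (assoc a (b ⊗ c) x).hom ≫
      (act.obj a).map (assoc b c x).hom =
    (assoc (a ⊗ b) c x).hom ≫ (assoc a b ((act.obj c).obj x)).hom
  triangle : ∀ (a : A) (x : L),
    (act.map (λ_ a).hom).app x = (assoc (𝟙_ A) a x).hom ≫ (unitor ((act.obj a).obj x)).hom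
  triangle' : ∀ (a : A) (x : L),
    (act.map (ρ_ a).hom).app x = (assoc a (𝟙_ A) x).hom ≫ (act.obj a).map (unitor x).hom

variable {A : Type*} [Category A] [MonoidalCategory A]
variable {B : Type*} [Category B] [MonoidalCategory B]
variable {LA : Type*} [Category LA] {LB : Type*} [Category LB]

/-- The action of an object. -/
abbrev LeftModuleStruct.smul {A : Type*} [Category A] [MonoidalCategory A]
    {L : Type*} [Category L] (M : LeftModuleStruct A L) (a : A) (x : L) : L :=
  (M.act.obj a).obj x

section

variable (MA : LeftModuleStruct A LA) (MB : LeftModuleStruct B LB)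
variable (Lf : B ⥤ A) (R : A ⥤ B) [R.LaxMonoidal] (adj : Lf ⊣ R) (F : LA ⥤ LB)

/-- `β` is an `R`-lax structure on `F`: natural transformation
`β_{a,x} : R(a) ⊙ F(x) ⟶ F(a ⊙ x)` satisfying the two coherence diagrams. -/
def IsRLax (β : ∀ (a : A) (x : LA), MB.smul (R.obj a) (F.obj x) ⟶ F.obj (MA.smul a x)) :
    Prop :=
  (∀ {a a' : A} (f : a ⟶ a') {x x' : LA} (g : x ⟶ x'),
    (MB.act.map (R.map f)).app (F.obj x) ≫ (MB.act.obj (R.obj a')).map (F.map g) ≫ β a' x' =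
      β a x ≫ F.map ((MA.act.map f).app x ≫ (MA.act.obj a').map g)) ∧
  (∀ (a b : A) (x : LA),
    (MB.act.map (μ R a b)).app (F.obj x) ≫ β (a ⊗ b) x ≫ F.map (MA.assoc a b x).hom =
      (MB.assoc (R.obj a) (R.obj b) (F.obj x)).hom ≫
        (MB.act.obj (R.obj a)).map (β b x) ≫ β a (MA.smul b x)) ∧
  (∀ x : LA,
    (MB.act.map (ε R)).app (F.obj x) ≫ β (𝟙_ A) x ≫ F.map (MA.unitor x).hom =
      (MB.unitor (F.obj x)).hom)

/-- The oplax monoidal structure map `L(a ⊗ b) ⟶ L(a) ⊗ L(b)` of the left adjoint `L`,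
induced by the adjunction and the lax monoidal structure of `R`. -/
noncomputable def deltaL (a b : B) : Lf.obj (a ⊗ b) ⟶ Lf.obj a ⊗ Lf.obj b :=
  Lf.map (adj.unit.app a ⊗ₘ adj.unit.app b) ≫
    Lf.map (μ R (Lf.obj a) (Lf.obj b)) ≫ adj.counit.app (Lf.obj a ⊗ Lf.obj b)

/-- The oplax monoidal structure map `L(𝟙_ℬ) ⟶ 𝟙_𝒜` of the left adjoint `L`. -/
noncomputable def etaL : Lf.obj (𝟙_ B) ⟶ 𝟙_ A :=
  Lf.map (ε R) ≫ adj.counit.app (𝟙_ A)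

/-- `α` is an `L`-oplax structure on `F`: it makes `F` a lax `ℬ`-module functor for the
`ℬ`-action on `𝓛` pulled back along `L` (whose oplax associator and unitor are induced by
the oplax monoidal structure of `L` coming from the adjunction). -/
noncomputable def IsLOplax
    (α : ∀ (b : B) (x : LA), MB.smul b (F.obj x) ⟶ F.obj (MA.smul (Lf.obj b) x)) : Prop :=
  (∀ {b b' : B} (f : b ⟶ b') {x x' : LA} (g : x ⟶ x'),
    (MB.act.map f).app (F.obj x) ≫ (MB.act.obj b').map (F.map g) ≫ α b' x' =
      α b x ≫ F.map ((MA.act.map (Lf.map f)).app x ≫ (MA.act.obj (Lf.obj b')).map g)) ∧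
  (∀ (a b : B) (x : LA),
    (MB.assoc a b (F.obj x)).hom ≫ (MB.act.obj a).map (α b x) ≫ α a (MA.smul (Lf.obj b) x) =
      α (a ⊗ b) x ≫
        F.map ((MA.act.map (deltaL Lf R adj a b)).app x ≫
          (MA.assoc (Lf.obj a) (Lf.obj b) x).hom)) ∧
  (∀ x : LA,
    α (𝟙_ B) x ≫ F.map ((MA.act.map (etaL Lf R adj)).app x ≫ (MA.unitor x).hom) =
      (MB.unitor (F.obj x)).hom)

/-- From an `R`-lax structure to an `L`-oplax structure: `α_{b,x} = β_{L(b),x} ∘ (η_b ⊙ 1)`. -/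
noncomputable def toOplax
    (β : ∀ (a : A) (x : LA), MB.smul (R.obj a) (F.obj x) ⟶ F.obj (MA.smul a x)) :
    ∀ (b : B) (x : LA), MB.smul b (F.obj x) ⟶ F.obj (MA.smul (Lf.obj b) x) :=
  fun b x => (MB.act.map (adj.unit.app b)).app (F.obj x) ≫ β (Lf.obj b) x

/-- From an `L`-oplax structure to an `R`-lax structure: `β_{a,x} = F(ε_a ⊙ 1) ∘ α_{R(a),x}`. -/
noncomputable def toLax
    (α : ∀ (b : B) (x : LA), MB.smul b (F.obj x) ⟶ F.obj (MA.smul (Lf.obj b) x)) :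
    ∀ (a : A) (x : LA), MB.smul (R.obj a) (F.obj x) ⟶ F.obj (MA.smul a x) :=
  fun a x => α (R.obj a) x ≫ F.map ((MA.act.map (adj.counit.app a)).app x)

/- `deltaL` and `etaL` are the oplax structure `Adjunction.leftAdjointOplaxMonoidal`, so its
compatibilities with the unit and counit apply. -/
lemma deltaL_eq_δ (a b : B) :
    letI := adj.leftAdjointOplaxMonoidal
    deltaL Lf R adj a b = Functor.OplaxMonoidal.δ Lf a b := by
  simp [deltaL, Adjunction.leftAdjointOplaxMonoidal_δ, Adjunction.homEquiv_counit]

lemma etaL_eq_η :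
    letI := adj.leftAdjointOplaxMonoidal
    etaL Lf R adj = Functor.OplaxMonoidal.η Lf := by
  simp [etaL, Adjunction.leftAdjointOplaxMonoidal_η, Adjunction.homEquiv_counit]

lemma unit_app_tensor_comp_map_deltaL (a b : B) :
    adj.unit.app (a ⊗ b) ≫ R.map (deltaL Lf R adj a b) =
      (adj.unit.app a ⊗ₘ adj.unit.app b) ≫ μ R (Lf.obj a) (Lf.obj b) := by
  let := adj.leftAdjointOplaxMonoidal
  rw [deltaL_eq_δ]
  exact adj.unit_app_tensor_comp_map_δ a b

lemma deltaL_comp_counit_app_tensor (a b : A) :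
    deltaL Lf R adj (R.obj a) (R.obj b) ≫ (adj.counit.app a ⊗ₘ adj.counit.app b) =
      Lf.map (μ R a b) ≫ adj.counit.app (a ⊗ b) := by
  let := adj.leftAdjointOplaxMonoidal
  rw [deltaL_eq_δ]
  exact (adj.map_μ_comp_counit_app_tensor a b).symm

lemma unit_app_unit_comp_map_etaL : adj.unit.app (𝟙_ B) ≫ R.map (etaL Lf R adj) = ε R := by
  let := adj.leftAdjointOplaxMonoidal
  rw [etaL_eq_η]
  exact adj.unit_app_unit_comp_map_η

lemma LeftModuleStruct.assoc_naturality_tensorHom (M : LeftModuleStruct A LA) {a a' b b' : A}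
    (f : a ⟶ a') (g : b ⟶ b') (x : LA) :
    (M.act.map (f ⊗ₘ g)).app x ≫ (M.assoc a' b' x).hom =
      (M.assoc a b x).hom ≫ (M.act.map f).app _ ≫ (M.act.obj a').map ((M.act.map g).app x) := by
  simpa using M.assoc_natural f g (𝟙 x)

variable {MA MB R F} in
lemma IsRLax.naturality_left
    {β : ∀ (a : A) (x : LA), MB.smul (R.obj a) (F.obj x) ⟶ F.obj (MA.smul a x)}
    (hβ : IsRLax MA MB R F β) {a a' : A} (f : a ⟶ a') (x : LA) :
    (MB.act.map (R.map f)).app (F.obj x) ≫ β a' x = β a x ≫ F.map ((MA.act.map f).app x) := by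
  simpa using hβ.1 f (𝟙 x)

variable {MA MB Lf R adj F} in
lemma IsLOplax.naturality_left
    {α : ∀ (b : B) (x : LA), MB.smul b (F.obj x) ⟶ F.obj (MA.smul (Lf.obj b) x)}
    (hα : IsLOplax MA MB Lf R adj F α) {b b' : B} (f : b ⟶ b') (x : LA) :
    (MB.act.map f).app (F.obj x) ≫ α b' x =
      α b x ≫ F.map ((MA.act.map (Lf.map f)).app x) := by
  simpa using hα.1 f (𝟙 x)

variable {MA MB Lf R adj F} in
lemma IsLOplax.naturality_right
    {α : ∀ (b : B) (x : LA), MB.smul b (F.obj x) ⟶ F.obj (MA.smul (Lf.obj b) x)}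
    (hα : IsLOplax MA MB Lf R adj F α) (b : B) {x x' : LA} (g : x ⟶ x') :
    (MB.act.obj b).map (F.map g) ≫ α b x' =
      α b x ≫ F.map ((MA.act.obj (Lf.obj b)).map g) := by
  simpa using hα.1 (𝟙 b) g

variable {MA MB R F} in
lemma IsRLax.isLOplax_toOplax
    {β : ∀ (a : A) (x : LA), MB.smul (R.obj a) (F.obj x) ⟶ F.obj (MA.smul a x)}
    (hβ : IsRLax MA MB R F β) : IsLOplax MA MB Lf R adj F (toOplax MA MB Lf R adj F β) := by
  refine ⟨fun {b b'} f {x x'} g => ?_, fun a b x => ?_, fun x => ?_⟩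
  · simp only [toOplax, NatTrans.naturality_assoc, Functor.id_obj, Functor.comp_obj]
    rw [← NatTrans.comp_app_assoc, ← Functor.map_comp, ← adj.unit_naturality,
      Functor.map_comp, NatTrans.comp_app_assoc, hβ.1 (Lf.map f) g, Category.assoc]
  · -- `η_a` slides to the front and merges with `η_b` across the associator; after the lax
    -- associativity of `β`, `(η_a ⊗ η_b) ≫ μ = η_{a ⊗ b} ≫ R (deltaL a b)` finishes.
    simp only [toOplax, Functor.map_comp, Category.assoc, NatTrans.naturality_assoc,
      Functor.id_obj, Functor.comp_obj]
    rw [← reassoc_of%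
        MB.assoc_naturality_tensorHom (adj.unit.app a) (adj.unit.app b) (F.obj x),
      ← hβ.2.1 (Lf.obj a) (Lf.obj b) x, ← NatTrans.comp_app_assoc, ← Functor.map_comp,
      ← unit_app_tensor_comp_map_deltaL, Functor.map_comp, NatTrans.comp_app_assoc,
      reassoc_of% hβ.naturality_left]
  · dsimp only [toOplax]
    rw [Functor.map_comp, Category.assoc, ← reassoc_of% hβ.naturality_left,
      ← NatTrans.comp_app_assoc, ← Functor.map_comp, unit_app_unit_comp_map_etaL]
    exact hβ.2.2 x

variable {MA MB Lf R adj F} in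
lemma IsLOplax.isRLax_toLax
    {α : ∀ (b : B) (x : LA), MB.smul b (F.obj x) ⟶ F.obj (MA.smul (Lf.obj b) x)}
    (hα : IsLOplax MA MB Lf R adj F α) : IsRLax MA MB R F (toLax MA MB Lf R adj F α) := by
  refine ⟨fun {a a'} f {x x'} g => ?_, fun a b x => ?_, fun x => ?_⟩
  · rw [toLax, toLax, reassoc_of% hα.1 (R.map f) g]
    simp only [Category.assoc, ← Functor.map_comp, NatTrans.naturality, Functor.id_obj]
    simp only [← NatTrans.comp_app_assoc, ← Functor.map_comp, adj.counit_naturality]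
  · dsimp only [toLax]
    have counit_assoc :
        (MA.act.map (Lf.map (μ R a b))).app x ≫ (MA.act.map (adj.counit.app (a ⊗ b))).app x ≫
          (MA.assoc a b x).hom =
        (MA.act.map (deltaL Lf R adj (R.obj a) (R.obj b))).app x ≫
          (MA.assoc (Lf.obj (R.obj a)) (Lf.obj (R.obj b)) x).hom ≫
          (MA.act.obj (Lf.obj (R.obj a))).map ((MA.act.map (adj.counit.app b)).app x) ≫
          (MA.act.map (adj.counit.app a)).app (MA.smul b x) := by
      rw [← NatTrans.comp_app_assoc, ← Functor.map_comp, ← deltaL_comp_counit_app_tensor,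
        Functor.map_comp, NatTrans.comp_app_assoc,
        MA.assoc_naturality_tensorHom (a' := a) (b' := b)]
      simp only [NatTrans.naturality, Functor.id_obj]
    simp only [Functor.map_comp, Category.assoc]
    rw [reassoc_of% hα.naturality_left (μ R a b) x, reassoc_of% hα.naturality_right,
      reassoc_of% hα.2.1]
    simp only [Category.assoc, ← Functor.map_comp, counit_assoc]
  · simp only [toLax, Category.assoc]
    rw [reassoc_of% hα.naturality_left (ε R) x]
    simpa only [etaL, Functor.map_comp, NatTrans.comp_app, Category.assoc] using hα.2.2 x

variable {MA MB R F} in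
lemma toLax_toOplax
    {β : ∀ (a : A) (x : LA), MB.smul (R.obj a) (F.obj x) ⟶ F.obj (MA.smul a x)}
    (hβ : IsRLax MA MB R F β) : toLax MA MB Lf R adj F (toOplax MA MB Lf R adj F β) = β := by
  funext a x
  rw [toLax, toOplax, Category.assoc, ← hβ.naturality_left, ← NatTrans.comp_app_assoc,
    ← Functor.map_comp, adj.right_triangle_components]
  simp

variable {MA MB Lf R adj F} in
lemma toOplax_toLax
    {α : ∀ (b : B) (x : LA), MB.smul b (F.obj x) ⟶ F.obj (MA.smul (Lf.obj b) x)}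
    (hα : IsLOplax MA MB Lf R adj F α) :
    toOplax MA MB Lf R adj F (toLax MA MB Lf R adj F α) = α := by
  funext b x
  rw [toOplax, toLax, reassoc_of% hα.naturality_left (adj.unit.app b) x, ← Functor.map_comp,
    ← NatTrans.comp_app, ← Functor.map_comp, adj.left_triangle_components]
  simp

/-- The two constructions are mutually inverse bijections between the set of `R`-lax
structures on `F` and that of `L`-oplax structures on `F`. -/
theorem rLax_equiv_lOplax :
    (∀ β, IsRLax MA MB R F β → IsLOplax MA MB Lf R adj F (toOplax MA MB Lf R adj F β)) ∧
    (∀ α, IsLOplax MA MB Lf R adj F α → IsRLax MA MB R F (toLax MA MB Lf R adj F α)) ∧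
    (∀ β, IsRLax MA MB R F β →
      toLax MA MB Lf R adj F (toOplax MA MB Lf R adj F β) = β) ∧
    (∀ α, IsLOplax MA MB Lf R adj F α →
      toOplax MA MB Lf R adj F (toLax MA MB Lf R adj F α) = α) :=
  ⟨fun _ hβ => hβ.isLOplax_toOplax Lf adj, fun _ hα => hα.isRLax_toLax,
    fun _ hβ => toLax_toOplax Lf adj hβ, fun _ hα => toOplax_toLax hα⟩

end

end Stmt7
end

section
/- Let 𝒜 be a monoidal category, 𝓛 a category, and (⊙ : 𝒜 × 𝓛 → 𝓛, α) a left unital action of the E₀-algebra (𝒜, 𝟙_𝒜) on 𝓛 in the 2-category Cat, i.e., a functor ⊙ with a natural isomorphism α : 𝟙_𝒜 ⊙ − ≅ id_𝓛. Then the functor 𝒜 → Fun(𝓛,𝓛), a ↦ (a ⊙ −), factors the action through the endofunctor category; consequently the monoidal category Fun(𝓛,𝓛) with the evaluation action and the unit id_𝓛 is the terminal left unital action on 𝓛, i.e., Fun(𝓛,𝓛) is the E₀-center of 𝓛 in Cat. -/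
/-!
A 1-morphism into `Fun(𝓛,𝓛)` carries an isomorphism `ρ : p ≅ g`, so a 2-morphism
`ξ : p ⟶ q` with `ξ ≫ ρ' = ρ` is forced to be `ρ ≫ ρ'⁻¹`. Its compatibility with the units
is then automatic: the pasting conditions say that `σ ≫ ρ` and `σ' ≫ ρ'` both equal `α⁻¹`,
and `ρ'` can be cancelled.
-/

open CategoryTheory MonoidalCategory

namespace Stmt10

section

variable {C : Type*} [Category C]

theorem existsUnique_comp_hom_eq {X Y Z : C} (f : X ⟶ Z) (e : Y ≅ Z) :
    ∃! ξ : X ⟶ Y, ξ ≫ e.hom = f :=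
  ⟨f ≫ e.inv, (e.eq_comp_inv).1 rfl, fun _ hξ => (e.eq_comp_inv).2 hξ⟩

theorem comp_eq_inv_of_comp_comp_hom_eq_id {X Y Z : C} {f : Y ⟶ X} {g : X ⟶ Z} (e : Z ≅ Y)
    (h : f ≫ g ≫ e.hom = 𝟙 Y) : f ≫ g = e.inv := by
  rw [← e.comp_hom_eq_id, Category.assoc, h]

theorem comp_eq_of_comp_hom_eq {X P Q G : C} {σ : X ⟶ P} {σ' : X ⟶ Q} {ρ : P ⟶ G} (ρ' : Q ≅ G)
    {ξ : P ⟶ Q} (hξ : ξ ≫ ρ'.hom = ρ) (hσ : σ ≫ ρ = σ' ≫ ρ'.hom) : σ ≫ ξ = σ' := by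
  rw [← cancel_mono ρ'.hom, Category.assoc, hξ, hσ]

end

theorem endofunctors_are_E0_center
    (L : Type*) [Category L]
    (A : Type*) [Category A] [MonoidalCategory A]
    (g : A ⥤ L ⥤ L) (α : g.obj (𝟙_ A) ≅ 𝟭 L) :
    -- the action factors through `Fun(𝓛,𝓛)` via `a ↦ a ⊙ −`: there is a 1-morphism of
    -- left unital actions whose underlying functor is `g` itself
    (∃ (σ : 𝟭 L ≅ g.obj (𝟙_ A)) (ρ : g ≅ g),
      σ.hom ≫ ρ.hom.app (𝟙_ A) ≫ α.hom = 𝟙 (𝟭 L)) ∧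
    -- terminality: between any two 1-morphisms of left unital actions into the canonical
    -- action of `Fun(𝓛,𝓛)` there is a unique 2-morphism
    (∀ (p q : A ⥤ L ⥤ L) (σ : 𝟭 L ≅ p.obj (𝟙_ A)) (σ' : 𝟭 L ≅ q.obj (𝟙_ A))
      (ρ : p ≅ g) (ρ' : q ≅ g),
      σ.hom ≫ ρ.hom.app (𝟙_ A) ≫ α.hom = 𝟙 (𝟭 L) →
      σ'.hom ≫ ρ'.hom.app (𝟙_ A) ≫ α.hom = 𝟙 (𝟭 L) →
      ∃! ξ : p ⟶ q,
        (σ.hom ≫ ξ.app (𝟙_ A) = σ'.hom) ∧ (∀ a : A, ξ.app a ≫ ρ'.hom.app a = ρ.hom.app a)) := by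
  refine ⟨⟨α.symm, Iso.refl g, by simp⟩, fun p q σ σ' ρ ρ' h h' => ?_⟩
  have hσ : σ.hom ≫ ρ.hom.app (𝟙_ A) = σ'.hom ≫ ρ'.hom.app (𝟙_ A) := by
    rw [comp_eq_inv_of_comp_comp_hom_eq_id α h, comp_eq_inv_of_comp_comp_hom_eq_id α h']
  obtain ⟨ξ, hξ, hξ_unique⟩ := existsUnique_comp_hom_eq ρ.hom ρ'
  have hξ_app (a : A) : ξ.app a ≫ ρ'.hom.app a = ρ.hom.app a := NatTrans.congr_app hξ a
  refine ⟨ξ, ⟨comp_eq_of_comp_hom_eq (ρ'.app (𝟙_ A)) (hξ_app _) hσ, hξ_app⟩, ?_⟩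
  rintro η ⟨-, hη⟩
  exact hξ_unique η (NatTrans.ext (funext hη))

end Stmt10
end

section
/- Let 𝓛 be a braided monoidal category and suppose a braided monoidal category 𝒜 acts on 𝓛 via a braided monoidal functor ⊙ : 𝒜 × 𝓛 → 𝓛 with a monoidal natural isomorphism 𝟙_𝒜 ⊙ − ≅ id_𝓛. Then for every a ∈ 𝒜 the object a ⊙ 𝟙_𝓛 is transparent in 𝓛 (lies in the Müger center Z₂(𝓛)), and a ↦ a ⊙ 𝟙_𝓛 defines a braided monoidal functor 𝒜 → Z₂(𝓛). -/
/-!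
`a ↦ a ⊙ 𝟙_𝓛` is the composite of `a ↦ (a, 𝟙_𝓛)`, braided monoidal componentwise (the constant
functor at a unit object is braided monoidal), with the braided functor `⊙`. For transparency: in
`𝒜 × 𝓛` the objects `(a, 𝟙_𝓛)` and `(𝟙_𝒜, y)` have trivial double braiding, since in each
component one of them is a unit object. A braided strong monoidal functor preserves this, so
`a ⊙ 𝟙_𝓛` centralizes `𝟙_𝒜 ⊙ y ≅ y`.
-/

open CategoryTheory MonoidalCategory BraidedCategory CategoryTheory.Functor.LaxMonoidal

namespace Stmt12

variable {A : Type*} [Category A] [MonoidalCategory A] [BraidedCategory A]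
variable {L : Type*} [Category L] [MonoidalCategory L] [BraidedCategory L]

/-- The functor `x ↦ 𝟙_𝒜 ⊙ x`. -/
noncomputable def uAct (odot : A × L ⥤ L) : L ⥤ L :=
  (((Functor.const L).obj (𝟙_ A)).prod' (𝟭 L)) ⋙ odot

/-- The functor `a ↦ a ⊙ 𝟙_𝓛`. -/
noncomputable def phiF (odot : A × L ⥤ L) : A ⥤ L :=
  ((𝟭 A).prod' ((Functor.const A).obj (𝟙_ L))) ⋙ odot

section Centralizes

variable {C : Type*} [Category C] [MonoidalCategory C] [BraidedCategory C]

/-- Müger's terminology: `Z₂(C)` consists of the objects that centralize every object. -/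
def Centralizes (X Y : C) : Prop :=
  (β_ X Y).hom ≫ (β_ Y X).hom = 𝟙 (X ⊗ Y)

lemma centralizes_tensorUnit_right (X : C) : Centralizes X (𝟙_ C) := by
  simp [Centralizes, braiding_tensorUnit_right, braiding_tensorUnit_left]

lemma centralizes_tensorUnit_left (X : C) : Centralizes (𝟙_ C) X := by
  simp [Centralizes, braiding_tensorUnit_right, braiding_tensorUnit_left]

lemma Centralizes.of_iso_right {X Y Y' : C} (h : Centralizes X Y) (e : Y ≅ Y') :
    Centralizes X Y' := by
  rw [Centralizes, ← cancel_epi (X ◁ e.hom), Category.comp_id, braiding_naturality_right_assoc,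
    braiding_naturality_left, reassoc_of% h]

open Functor.OplaxMonoidal in
lemma Centralizes.map {D : Type*} [Category D] [MonoidalCategory D] [BraidedCategory D]
    (F : C ⥤ D) [F.Braided] {X Y : C} (h : Centralizes X Y) :
    Centralizes (F.obj X) (F.obj Y) := by
  have hF : δ F X Y ≫ ((β_ (F.obj X) (F.obj Y)).hom ≫ (β_ (F.obj Y) (F.obj X)).hom) ≫ μ F X Y =
      𝟙 _ := by
    simpa using congrArg F.map h
  rw [Centralizes, ← cancel_epi (δ F X Y), ← cancel_mono (μ F X Y)]
  simpa using hF

end Centralizes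

section Product

variable {C D : Type*} [Category C] [MonoidalCategory C] [BraidedCategory C]
  [Category D] [MonoidalCategory D] [BraidedCategory D]

instance prodBraided : BraidedCategory (C × D) where
  braiding X Y := Iso.prod (β_ X.1 Y.1) (β_ X.2 Y.2)
  braiding_naturality_right X _ _ f := by ext <;> simp
  braiding_naturality_left f Z := by ext <;> simp
  hexagon_forward X Y Z := by ext <;> simp
  hexagon_reverse X Y Z := by ext <;> simp

@[simp] lemma prod_braiding_hom_fst (X Y : C × D) : (β_ X Y).hom.1 = (β_ X.1 Y.1).hom := rfl

@[simp] lemma prod_braiding_hom_snd (X Y : C × D) : (β_ X Y).hom.2 = (β_ X.2 Y.2).hom := rfl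

lemma Centralizes.prod {X Y : C × D} (h₁ : Centralizes X.1 Y.1) (h₂ : Centralizes X.2 Y.2) :
    Centralizes X Y :=
  Prod.ext h₁ h₂

instance Functor.Braided.prod' {E : Type*} [Category E] [MonoidalCategory E] [BraidedCategory E]
    (F : E ⥤ C) (G : E ⥤ D) [F.Braided] [G.Braided] : (F.prod' G).Braided where
  braided X Y := by ext <;> simp

end Product

section ConstUnit

variable (C : Type*) [Category C] [MonoidalCategory C] (D : Type*) [Category D] [MonoidalCategory D]

instance : ((Functor.const C).obj (𝟙_ D)).Monoidal :=
  Functor.CoreMonoidal.toMonoidal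
    { εIso := Iso.refl _
      μIso _ _ := λ_ (𝟙_ D)
      associativity _ _ _ := by simp [unitors_equal]
      left_unitality _ := by simp [unitors_equal]
      right_unitality _ := by simp [unitors_equal] }

variable {C D} in
@[simp] lemma const_tensorUnit_μ (X Y : C) :
    μ ((Functor.const C).obj (𝟙_ D)) X Y = (λ_ (𝟙_ D)).hom :=
  rfl

instance [BraidedCategory C] [BraidedCategory D] : ((Functor.const C).obj (𝟙_ D)).Braided where
  braided _ _ := by simp [unitors_equal, unitors_inv_equal]

end ConstUnit

theorem action_lands_in_Mueger_center_general
    (odot : A × L ⥤ L) [odot.Monoidal]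
    -- `⊙` is braided (the braiding on `𝒜 × 𝓛` is componentwise):
    (hbraided : ∀ (a b : A) (x y : L),
      (β_ (odot.obj (a, x)) (odot.obj (b, y))).hom ≫ μ odot (b, y) (a, x) =
        μ odot (a, x) (b, y) ≫
          odot.map ((((β_ a b).hom, (β_ x y).hom)) :
            ((a ⊗ b, x ⊗ y) : A × L) ⟶ (b ⊗ a, y ⊗ x)))
    -- left unital structure: a monoidal natural isomorphism `𝟙_𝒜 ⊙ − ≅ id`
    (α : uAct odot ≅ 𝟭 L) :
    -- every `a ⊙ 𝟙_𝓛` is transparent in `𝓛` ...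
    (∀ (a : A) (y : L),
      (β_ (odot.obj (a, 𝟙_ L)) y).hom ≫ (β_ y (odot.obj (a, 𝟙_ L))).hom =
        𝟙 (odot.obj (a, 𝟙_ L) ⊗ y)) ∧
    -- ... and `a ↦ a ⊙ 𝟙_𝓛` is a braided monoidal functor (into `Z₂(𝓛) ⊆ 𝓛`)
    Nonempty ((phiF odot).Braided) := by
  let _ : odot.Braided := { braided := fun P Q => (hbraided P.1 Q.1 P.2 Q.2).symm }
  refine ⟨fun a y => ?_, ⟨inferInstanceAs
    (((𝟭 A).prod' ((Functor.const A).obj (𝟙_ L)) ⋙ odot).Braided)⟩⟩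
  have h : Centralizes (odot.obj (a, 𝟙_ L)) (odot.obj (𝟙_ A, y)) :=
    (Centralizes.prod (centralizes_tensorUnit_right a) (centralizes_tensorUnit_left y)).map odot
  exact h.of_iso_right (α.app y)

theorem action_lands_in_Mueger_center
    (odot : A × L ⥤ L) [odot.Monoidal]
    -- `⊙` is braided (the braiding on `𝒜 × 𝓛` is componentwise):
    (hbraided : ∀ (a b : A) (x y : L),
      (β_ (odot.obj (a, x)) (odot.obj (b, y))).hom ≫ μ odot (b, y) (a, x) =
        μ odot (a, x) (b, y) ≫
          odot.map ((((β_ a b).hom, (β_ x y).hom)) :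
            ((a ⊗ b, x ⊗ y) : A × L) ⟶ (b ⊗ a, y ⊗ x)))
    -- left unital structure: a monoidal natural isomorphism `𝟙_𝒜 ⊙ − ≅ id`
    (α : uAct odot ≅ 𝟭 L)
    (hα_unit : ε odot ≫ α.hom.app (𝟙_ L) = 𝟙 (𝟙_ L))
    (hα_tensor : ∀ x y : L,
      μ odot (𝟙_ A, x) (𝟙_ A, y) ≫
          odot.map ((((λ_ (𝟙_ A)).hom, 𝟙 (x ⊗ y))) :
            ((𝟙_ A ⊗ 𝟙_ A, x ⊗ y) : A × L) ⟶ (𝟙_ A, x ⊗ y)) ≫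
          α.hom.app (x ⊗ y) =
        (α.hom.app x ⊗ₘ α.hom.app y)) :
    -- every `a ⊙ 𝟙_𝓛` is transparent in `𝓛` ...
    (∀ (a : A) (y : L),
      (β_ (odot.obj (a, 𝟙_ L)) y).hom ≫ (β_ y (odot.obj (a, 𝟙_ L))).hom =
        𝟙 (odot.obj (a, 𝟙_ L) ⊗ y)) ∧
    -- ... and `a ↦ a ⊙ 𝟙_𝓛` is a braided monoidal functor (into `Z₂(𝓛) ⊆ 𝓛`)
    Nonempty ((phiF odot).Braided) :=
  action_lands_in_Mueger_center_general odot hbraided α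

end Stmt12
end

section
/- Let 𝒜 be a braided monoidal category with braiding c, and let 𝓛 be a strongly unital monoidal left 𝒜̄-module enriched in 𝒜 (where 𝒜̄ denotes 𝒜 with the inverse braiding), so that the canonical construction gives an 𝒜-enriched monoidal category ᴬ𝓛. Then the monoidal structure on ᴬ𝓛 is determined by composition morphisms [x₁,x₂] ⊗ [y₁,y₂] → [x₁⊗y₁, x₂⊗y₂] induced by the universal property of internal homs from the composite ([x₁,x₂] ⊗ [y₁,y₂]) ⊙ (x₁ ⊗ y₁) → ([x₁,x₂] ⊙ x₁) ⊗ ([y₁,y₂] ⊙ y₁) → x₂ ⊗ y₂ (using the oplax monoidal structure of ⊙ and the evaluations), and these morphisms are compatible with the enriched composition: the square relating ([y₁,y₂]⊗[z₁,z₂]) composed tensor-wise and composition-wise commutes, making ᴬ𝓛 an enriched monoidal category whose underlying monoidal category is 𝓛. -/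
/-!
STATEMENT 13: Let `𝒜` be braided and `𝓛` a strongly unital monoidal left `𝒜̄`-module
enriched in `𝒜` (the action `⊙` is oplax monoidal, with structure maps
`m2 : (a⊗b) ⊙ (x⊗y) ⟶ (a⊙x) ⊗ (b⊙y)`).  The tensor morphisms
`t : [x₁,x₂] ⊗ [y₁,y₂] ⟶ [x₁⊗y₁, x₂⊗y₂]` induced by the universal property of internal
homs from `([x₁,x₂] ⊗ [y₁,y₂]) ⊙ (x₁⊗y₁) ⟶ ([x₁,x₂]⊙x₁) ⊗ ([y₁,y₂]⊙y₁) ⟶ x₂ ⊗ y₂` are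
compatible with the enriched composition (the interchange square commutes, where the middle
swap uses the (anti-)braiding of `𝒜`) and with the enriched identities, making the
canonical construction `ᴬ𝓛` an enriched monoidal category with underlying monoidal
category `𝓛`.
-/

open CategoryTheory MonoidalCategory BraidedCategory

namespace Stmt13

/-- A left module category over a monoidal category. -/
structure LeftModuleStruct (A : Type*) [Category A] [MonoidalCategory A]
    (L : Type*) [Category L] where
  act : A ⥤ L ⥤ L
  assoc : ∀ (a b : A) (x : L), (act.obj (a ⊗ b)).obj x ≅ (act.obj a).obj ((act.obj b).obj x)
  unitor : ∀ x : L, (act.obj (𝟙_ A)).obj x ≅ x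
  assoc_natural :
    ∀ {a a' b b' : A} {x x' : L} (f : a ⟶ a') (g : b ⟶ b') (h : x ⟶ x'),
      (act.map (f ⊗ₘ g)).app x ≫ (act.obj (a' ⊗ b')).map h ≫ (assoc a' b' x').hom =
        (assoc a b x).hom ≫ (act.map f).app _ ≫
          (act.obj a').map ((act.map g).app x ≫ (act.obj b').map h)
  unitor_natural : ∀ {x x' : L} (h : x ⟶ x'),
    (act.obj (𝟙_ A)).map h ≫ (unitor x').hom = (unitor x).hom ≫ h
  pentagon : ∀ (a b c : A) (x : L),
    (act.map (α_ a b c).hom).app x ≫ (assoc a (b ⊗ c) x).hom ≫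
      (act.obj a).map (assoc b c x).hom =
    (assoc (a ⊗ b) c x).hom ≫ (assoc a b ((act.obj c).obj x)).hom
  triangle : ∀ (a : A) (x : L),
    (act.map (λ_ a).hom).app x = (assoc (𝟙_ A) a x).hom ≫ (unitor ((act.obj a).obj x)).hom
  triangle' : ∀ (a : A) (x : L),
    (act.map (ρ_ a).hom).app x = (assoc a (𝟙_ A) x).hom ≫ (act.obj a).map (unitor x).hom

abbrev LeftModuleStruct.smul {A : Type*} [Category A] [MonoidalCategory A]
    {L : Type*} [Category L] (M : LeftModuleStruct A L) (a : A) (x : L) : L :=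
  (M.act.obj a).obj x

section

variable {A : Type*} [Category A] [MonoidalCategory A] [BraidedCategory A]
variable {L : Type*} [Category L] [MonoidalCategory L]
variable (M : LeftModuleStruct A L)
variable (H : L → L → A)
variable (e : ∀ (a : A) (x y : L), (M.smul a x ⟶ y) ≃ (a ⟶ H x y))

noncomputable def ev (x y : L) : M.smul (H x y) x ⟶ y := (e (H x y) x y).symm (𝟙 (H x y))

noncomputable def idA (x : L) : 𝟙_ A ⟶ H x x := e (𝟙_ A) x x (M.unitor x).hom

noncomputable def compA (x y z : L) : H y z ⊗ H x y ⟶ H x z :=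
  e (H y z ⊗ H x y) x z
    ((M.assoc (H y z) (H x y) x).hom ≫ (M.act.obj (H y z)).map (ev M H e x y) ≫ ev M H e y z)

/-- The middle-four swap in `𝒜`, using the anti-braiding (Convention 4.3). -/
noncomputable def swapA (a₁ a₂ b₁ b₂ : A) : (a₁ ⊗ a₂) ⊗ (b₁ ⊗ b₂) ⟶ (a₁ ⊗ b₁) ⊗ (a₂ ⊗ b₂) :=
  (α_ a₁ a₂ (b₁ ⊗ b₂)).hom ≫
    (a₁ ◁ ((α_ a₂ b₁ b₂).inv ≫ ((β_ b₁ a₂).inv ▷ b₂) ≫ (α_ b₁ a₂ b₂).hom)) ≫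
    (α_ a₁ b₁ (a₂ ⊗ b₂)).inv

section

variable (m2 : ∀ (a b : A) (x y : L),
  M.smul (a ⊗ b) (x ⊗ y) ⟶ M.smul a x ⊗ M.smul b y)

/-- The enriched tensor product morphism `[x₁,x₂] ⊗ [y₁,y₂] ⟶ [x₁⊗y₁, x₂⊗y₂]` induced by
the universal property of internal homs. -/
noncomputable def tmor (x₁ x₂ y₁ y₂ : L) :
    H x₁ x₂ ⊗ H y₁ y₂ ⟶ H (x₁ ⊗ y₁) (x₂ ⊗ y₂) :=
  e (H x₁ x₂ ⊗ H y₁ y₂) (x₁ ⊗ y₁) (x₂ ⊗ y₂)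
    (m2 (H x₁ x₂) (H y₁ y₂) x₁ y₁ ≫ (ev M H e x₁ x₂ ⊗ₘ ev M H e y₁ y₂))

/-!
Each identity is an equation between morphisms into an internal hom, so it suffices to compare
the transposes, i.e. the composites `(f ⊙ x) ≫ ev`. For the interchange square both transposes
reduce to `assoc ≫ ([x₂,x₃] ⊗ [y₂,y₃]) ⊙ (m2 ≫ (ev ⊗ ev)) ≫ m2 ≫ (ev ⊗ ev)`: on the left via the
naturality and associativity of `m2`, on the right via the naturality of the module
associator. The unit identity reduces to the unit axiom of `m2`.
-/

def HomEquivNatural : Prop :=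
  ∀ {a a' : A} (f : a' ⟶ a) {x y : L} (g : M.smul a x ⟶ y),
    e a' x y ((M.act.map f).app x ≫ g) = f ≫ e a x y g

def OplaxNatural : Prop :=
  ∀ {a a' b b' : A} {x x' y y' : L} (f : a ⟶ a') (g : b ⟶ b') (p : x ⟶ x') (q : y ⟶ y'),
    (M.act.map (f ⊗ₘ g)).app (x ⊗ y) ≫ (M.act.obj (a' ⊗ b')).map (p ⊗ₘ q) ≫
        m2 a' b' x' y' =
      m2 a b x y ≫
        (((M.act.map f).app x ≫ (M.act.obj a').map p) ⊗ₘ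
          ((M.act.map g).app y ≫ (M.act.obj b').map q))

def OplaxAssociative : Prop :=
  ∀ (a₁ a₂ b₁ b₂ : A) (x y : L),
    (M.act.map (swapA a₁ a₂ b₁ b₂)).app (x ⊗ y) ≫ m2 (a₁ ⊗ b₁) (a₂ ⊗ b₂) x y ≫
        ((M.assoc a₁ b₁ x).hom ⊗ₘ (M.assoc a₂ b₂ y).hom) =
      (M.assoc (a₁ ⊗ a₂) (b₁ ⊗ b₂) (x ⊗ y)).hom ≫
        (M.act.obj (a₁ ⊗ a₂)).map (m2 b₁ b₂ x y) ≫ m2 a₁ a₂ (M.smul b₁ x) (M.smul b₂ y)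

def OplaxUnital : Prop :=
  ∀ x y : L,
    m2 (𝟙_ A) (𝟙_ A) x y ≫ ((M.unitor x).hom ⊗ₘ (M.unitor y).hom) =
      (M.act.map (λ_ (𝟙_ A)).hom).app (x ⊗ y) ≫ (M.unitor (x ⊗ y)).hom

omit [BraidedCategory A] in
lemma OplaxNatural.act_map (h : OplaxNatural M m2) {a a' b b' : A} (f : a ⟶ a') (g : b ⟶ b')
    (x y : L) :
    (M.act.map (f ⊗ₘ g)).app (x ⊗ y) ≫ m2 a' b' x y =
      m2 a b x y ≫ ((M.act.map f).app x ⊗ₘ (M.act.map g).app y) := by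
  simpa using h f g (𝟙 x) (𝟙 y)

omit [BraidedCategory A] in
lemma OplaxNatural.obj_map (h : OplaxNatural M m2) (a b : A) {x x' y y' : L} (p : x ⟶ x')
    (q : y ⟶ y') :
    (M.act.obj (a ⊗ b)).map (p ⊗ₘ q) ≫ m2 a b x' y' =
      m2 a b x y ≫ ((M.act.obj a).map p ⊗ₘ (M.act.obj b).map q) := by
  simpa using h (𝟙 a) (𝟙 b) p q

omit [BraidedCategory A] [MonoidalCategory L] in
lemma act_map_app_ev (nat : HomEquivNatural M H e) {a : A} {x y : L} (f : a ⟶ H x y) :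
    (M.act.map f).app x ≫ ev M H e x y = (e a x y).symm f := by
  apply (e a x y).injective
  rw [Equiv.apply_symm_apply, ev, nat, Equiv.apply_symm_apply, Category.comp_id]

omit [BraidedCategory A] [MonoidalCategory L] in
lemma hom_ext_of_act_map_ev (nat : HomEquivNatural M H e) {a : A} {x y : L}
    {f g : a ⟶ H x y}
    (h : (M.act.map f).app x ≫ ev M H e x y = (M.act.map g).app x ≫ ev M H e x y) :
    f = g := by
  rw [act_map_app_ev M H e nat, act_map_app_ev M H e nat] at h
  exact (e a x y).symm.injective h

omit [BraidedCategory A] [MonoidalCategory L] in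
lemma act_map_idA_ev (nat : HomEquivNatural M H e) (x : L) :
    (M.act.map (idA M H e x)).app x ≫ ev M H e x x = (M.unitor x).hom := by
  rw [act_map_app_ev M H e nat, idA, Equiv.symm_apply_apply]

omit [BraidedCategory A] [MonoidalCategory L] in
lemma act_map_compA_ev (nat : HomEquivNatural M H e) (x y z : L) :
    (M.act.map (compA M H e x y z)).app x ≫ ev M H e x z =
      (M.assoc (H y z) (H x y) x).hom ≫ (M.act.obj (H y z)).map (ev M H e x y) ≫
        ev M H e y z := by
  rw [act_map_app_ev M H e nat, compA, Equiv.symm_apply_apply]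

omit [BraidedCategory A] in
lemma act_map_tmor_ev (nat : HomEquivNatural M H e) (x₁ x₂ y₁ y₂ : L) :
    (M.act.map (tmor M H e m2 x₁ x₂ y₁ y₂)).app (x₁ ⊗ y₁) ≫
        ev M H e (x₁ ⊗ y₁) (x₂ ⊗ y₂) =
      m2 (H x₁ x₂) (H y₁ y₂) x₁ y₁ ≫ (ev M H e x₁ x₂ ⊗ₘ ev M H e y₁ y₂) := by
  rw [act_map_app_ev M H e nat, tmor, Equiv.symm_apply_apply]

lemma act_map_swapA_compA_tmor_ev (nat : HomEquivNatural M H e) (hnat : OplaxNatural M m2)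
    (hassoc : OplaxAssociative M m2) (x₁ x₂ x₃ y₁ y₂ y₃ : L) :
    (M.act.map (swapA (H x₂ x₃) (H y₂ y₃) (H x₁ x₂) (H y₁ y₂) ≫
          (compA M H e x₁ x₂ x₃ ⊗ₘ compA M H e y₁ y₂ y₃) ≫ tmor M H e m2 x₁ x₃ y₁ y₃)).app
        (x₁ ⊗ y₁) ≫ ev M H e (x₁ ⊗ y₁) (x₃ ⊗ y₃) =
      (M.assoc _ _ _).hom ≫
        (M.act.obj _).map (m2 (H x₁ x₂) (H y₁ y₂) x₁ y₁ ≫ (ev M H e x₁ x₂ ⊗ₘ ev M H e y₁ y₂)) ≫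
          m2 (H x₂ x₃) (H y₂ y₃) x₂ y₂ ≫ (ev M H e x₂ x₃ ⊗ₘ ev M H e y₂ y₃) := by
  simp only [CategoryTheory.Functor.map_comp, NatTrans.comp_app, Category.assoc]
  rw [act_map_tmor_ev M H e m2 nat, reassoc_of% hnat.act_map, tensorHom_comp_tensorHom,
    act_map_compA_ev M H e nat, act_map_compA_ev M H e nat, ← tensorHom_comp_tensorHom,
    ← tensorHom_comp_tensorHom, reassoc_of% hassoc, ← reassoc_of% hnat.obj_map]

omit [BraidedCategory A] in
lemma act_map_tmor_compA_ev (nat : HomEquivNatural M H e) (x₁ x₂ x₃ y₁ y₂ y₃ : L) :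
    (M.act.map ((tmor M H e m2 x₂ x₃ y₂ y₃ ⊗ₘ tmor M H e m2 x₁ x₂ y₁ y₂) ≫
          compA M H e (x₁ ⊗ y₁) (x₂ ⊗ y₂) (x₃ ⊗ y₃))).app (x₁ ⊗ y₁) ≫
        ev M H e (x₁ ⊗ y₁) (x₃ ⊗ y₃) =
      (M.assoc _ _ _).hom ≫
        (M.act.obj _).map (m2 (H x₁ x₂) (H y₁ y₂) x₁ y₁ ≫ (ev M H e x₁ x₂ ⊗ₘ ev M H e y₁ y₂)) ≫
          m2 (H x₂ x₃) (H y₂ y₃) x₂ y₂ ≫ (ev M H e x₂ x₃ ⊗ₘ ev M H e y₂ y₃) := by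
  have h := M.assoc_natural (tmor M H e m2 x₂ x₃ y₂ y₃) (tmor M H e m2 x₁ x₂ y₁ y₂)
    (𝟙 (x₁ ⊗ y₁))
  simp only [CategoryTheory.Functor.map_id, Category.id_comp, Category.comp_id] at h
  rw [CategoryTheory.Functor.map_comp, NatTrans.comp_app, Category.assoc,
    act_map_compA_ev M H e nat, reassoc_of% h, ← CategoryTheory.Functor.map_comp_assoc,
    act_map_tmor_ev M H e m2 nat, ← NatTrans.naturality_assoc, act_map_tmor_ev M H e m2 nat]

omit [BraidedCategory A] in
lemma act_map_idA_tmor_ev (nat : HomEquivNatural M H e) (hnat : OplaxNatural M m2)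
    (hunit : OplaxUnital M m2) (x y : L) :
    (M.act.map ((λ_ (𝟙_ A)).inv ≫ (idA M H e x ⊗ₘ idA M H e y) ≫ tmor M H e m2 x x y y)).app
        (x ⊗ y) ≫ ev M H e (x ⊗ y) (x ⊗ y) =
      (M.unitor (x ⊗ y)).hom := by
  simp only [CategoryTheory.Functor.map_comp, NatTrans.comp_app, Category.assoc]
  rw [act_map_tmor_ev M H e m2 nat, reassoc_of% hnat.act_map, tensorHom_comp_tensorHom,
    act_map_idA_ev M H e nat, act_map_idA_ev M H e nat, hunit, ← NatTrans.comp_app_assoc,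
    ← CategoryTheory.Functor.map_comp, Iso.inv_hom_id, CategoryTheory.Functor.map_id,
    NatTrans.id_app, Category.id_comp]

theorem canonical_construction_monoidal
    -- naturality of the internal-hom adjunction
    (nat : ∀ {a a' : A} (f : a' ⟶ a) {x y : L} (g : M.smul a x ⟶ y),
      e a' x y ((M.act.map f).app x ≫ g) = f ≫ e a x y g)
    -- naturality of the oplax structure maps of the action
    (hm2_nat : ∀ {a a' b b' : A} {x x' y y' : L}
      (f : a ⟶ a') (g : b ⟶ b') (p : x ⟶ x') (q : y ⟶ y'),
      (M.act.map (f ⊗ₘ g)).app (x ⊗ y) ≫ (M.act.obj (a' ⊗ b')).map (p ⊗ₘ q) ≫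
          m2 a' b' x' y' =
        m2 a b x y ≫
          (((M.act.map f).app x ≫ (M.act.obj a').map p) ⊗ₘ
            ((M.act.map g).app y ≫ (M.act.obj b').map q)))
    -- oplax compatibility of `m2` with the module associator and the anti-braiding of `𝒜`
    (hm2_assoc : ∀ (a₁ a₂ b₁ b₂ : A) (x y : L),
      (M.act.map (swapA a₁ a₂ b₁ b₂)).app (x ⊗ y) ≫ m2 (a₁ ⊗ b₁) (a₂ ⊗ b₂) x y ≫
          ((M.assoc a₁ b₁ x).hom ⊗ₘ (M.assoc a₂ b₂ y).hom) =
        (M.assoc (a₁ ⊗ a₂) (b₁ ⊗ b₂) (x ⊗ y)).hom ≫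
          (M.act.obj (a₁ ⊗ a₂)).map (m2 b₁ b₂ x y) ≫
          m2 a₁ a₂ (M.smul b₁ x) (M.smul b₂ y))
    -- unit compatibility of `m2`
    (hm2_unit : ∀ x y : L,
      m2 (𝟙_ A) (𝟙_ A) x y ≫ ((M.unitor x).hom ⊗ₘ (M.unitor y).hom) =
        (M.act.map (λ_ (𝟙_ A)).hom).app (x ⊗ y) ≫ (M.unitor (x ⊗ y)).hom) :
    -- the interchange square: the tensor morphisms are compatible with the composition
    (∀ x₁ x₂ x₃ y₁ y₂ y₃ : L,
      swapA (H x₂ x₃) (H y₂ y₃) (H x₁ x₂) (H y₁ y₂) ≫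
          (compA M H e x₁ x₂ x₃ ⊗ₘ compA M H e y₁ y₂ y₃) ≫
          tmor M H e m2 x₁ x₃ y₁ y₃ =
        (tmor M H e m2 x₂ x₃ y₂ y₃ ⊗ₘ tmor M H e m2 x₁ x₂ y₁ y₂) ≫
          compA M H e (x₁ ⊗ y₁) (x₂ ⊗ y₂) (x₃ ⊗ y₃)) ∧
    -- and with the enriched identities, so that the underlying monoidal category is `𝓛`
    (∀ x y : L,
      (λ_ (𝟙_ A)).inv ≫ (idA M H e x ⊗ₘ idA M H e y) ≫ tmor M H e m2 x x y y =
        idA M H e (x ⊗ y)) := by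
  refine ⟨fun x₁ x₂ x₃ y₁ y₂ y₃ => ?_, fun x y => ?_⟩
  · apply hom_ext_of_act_map_ev M H e nat
    rw [act_map_swapA_compA_tmor_ev M H e m2 nat hm2_nat hm2_assoc,
      act_map_tmor_compA_ev M H e m2 nat]
  · apply hom_ext_of_act_map_ev M H e nat
    rw [act_map_idA_tmor_ev M H e m2 nat hm2_nat hm2_unit, act_map_idA_ev M H e nat]

end

end

end Stmt13
end

section
/- Let ℬ be a monoidal category and 𝓜 a ℬ-enriched category. Suppose for all ℬ-functors F̄, Ḡ : 𝓜 → 𝓜 the object [F̄,Ḡ] ∈ Z₁(ℬ) exists, defined as terminal among pairs (a, {a_x}) with a ∈ Z₁(ℬ) and a_x : I(a) → 𝓜(F(x),G(x)) making the naturality square (involving the half-braiding of a and the enriched structure maps of F̄ and Ḡ) commute. Then the set Z₁(ℬ)(𝟙, [F̄,Ḡ]) is in natural bijection with the set of ℬ-natural transformations F̄ ⇒ Ḡ. -/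
/-!
A morphism `𝟙 ⟶ T` in the center, composed with `{T_x}`, is a `𝟙`-graded transformation, and
`𝟙`-graded transformations are exactly the `ℬ`-natural ones because the half-braiding of the unit
is built from unitors. Conversely, terminality of `(T, {T_x})` applied to the pair `(𝟙, ξ)` gives
the unique morphism.
-/

open CategoryTheory MonoidalCategory

namespace Stmt14

variable {B : Type*} [Category B] [MonoidalCategory B]
variable {C : Type*} [EnrichedCategory B C]

/-- `ξ` is a `ℬ`-natural transformation `F̄ ⇒ Ḡ`: a family
`ξ_x : 𝟙 ⟶ 𝓜(F(x),G(x))` satisfying the enriched naturality condition. -/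
def IsENat (F G : EnrichedFunctor B C C)
    (ξ : ∀ x : C, 𝟙_ B ⟶ (F.obj x ⟶[B] G.obj x)) : Prop :=
  ∀ x y : C,
    (λ_ (x ⟶[B] y)).hom ≫ (ρ_ (x ⟶[B] y)).inv ≫ (F.map x y ⊗ₘ ξ y) ≫
        eComp B (F.obj x) (F.obj y) (G.obj y) =
      (ξ x ⊗ₘ G.map x y) ≫ eComp B (F.obj x) (G.obj x) (G.obj y)

def _root_.CategoryTheory.GradedNatTrans.precomp {D : Type*} [EnrichedCategory B D]
    {F G : EnrichedFunctor B C D} {a b : Center B} (g : a ⟶ b) (σ : GradedNatTrans b F G) :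
    GradedNatTrans a F G where
  app x := g.f ≫ σ.app x
  naturality x y := by
    calc (a.2.β (x ⟶[B] y)).hom ≫ (F.map x y ⊗ₘ (g.f ≫ σ.app y)) ≫ eComp B _ _ _
        = ((a.2.β (x ⟶[B] y)).hom ≫ ((x ⟶[B] y) ◁ g.f)) ≫
            (F.map x y ⊗ₘ σ.app y) ≫ eComp B _ _ _ := by
          simp [MonoidalCategory.tensorHom_def']
      _ = (g.f ▷ (x ⟶[B] y)) ≫ (b.2.β (x ⟶[B] y)).hom ≫
            (F.map x y ⊗ₘ σ.app y) ≫ eComp B _ _ _ := by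
          rw [← g.comm, Category.assoc]
      _ = ((g.f ≫ σ.app x) ⊗ₘ G.map x y) ≫ eComp B _ _ _ := by
          rw [σ.naturality]
          simp [MonoidalCategory.tensorHom_def]

namespace GradedNatTrans

variable {F G : EnrichedFunctor B C C}

/-- The half-braiding of the monoidal unit of the center is `λ ≪≫ ρ⁻¹`. -/
theorem naturality_unit_iff_isENat (ξ : ∀ x : C, 𝟙_ B ⟶ (F.obj x ⟶[B] G.obj x)) :
    (∀ x y : C, ((𝟙_ (Center B)).2.β (x ⟶[B] y)).hom ≫ (F.map x y ⊗ₘ ξ y) ≫ eComp B _ _ _ =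
      (ξ x ⊗ₘ G.map x y) ≫ eComp B _ _ _) ↔ IsENat F G ξ :=
  forall₂_congr fun _ _ => Iff.of_eq (congrArg (· = _) (Category.assoc _ _ _))

theorem isENat_app (σ : GradedNatTrans (𝟙_ (Center B)) F G) : IsENat F G σ.app :=
  (naturality_unit_iff_isENat σ.app).mp σ.naturality

def ofIsENat {ξ : ∀ x : C, 𝟙_ B ⟶ (F.obj x ⟶[B] G.obj x)} (hξ : IsENat F G ξ) :
    GradedNatTrans (𝟙_ (Center B)) F G where
  app := ξ
  naturality := (naturality_unit_iff_isENat ξ).mpr hξ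

end GradedNatTrans

theorem hom_from_unit_to_enriched_nat_obj_equiv_enriched_nat_trans
    (F G : EnrichedFunctor B C C)
    (T : CategoryTheory.Center B) (Tapp : GradedNatTrans T F G)
    -- `(T, Tapp)` is terminal among pairs `(a, {a_x})` satisfying the naturality square
    (hterm : ∀ (a : CategoryTheory.Center B) (σ : GradedNatTrans a F G),
      ∃! f : a ⟶ T, ∀ x : C, f.f ≫ Tapp.app x = σ.app x) :
    -- `Z₁(ℬ)(𝟙, T) ≃ {ℬ-natural transformations F̄ ⇒ Ḡ}`, via `g ↦ {g ≫ T_x}`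
    (∀ g : 𝟙_ (CategoryTheory.Center B) ⟶ T,
      IsENat F G (fun x => g.f ≫ Tapp.app x)) ∧
    (∀ ξ : ∀ x : C, 𝟙_ B ⟶ (F.obj x ⟶[B] G.obj x), IsENat F G ξ →
      ∃! g : 𝟙_ (CategoryTheory.Center B) ⟶ T, ∀ x : C, g.f ≫ Tapp.app x = ξ x) :=
  ⟨fun g => GradedNatTrans.isENat_app (Tapp.precomp g),
    fun _ hξ => hterm _ (GradedNatTrans.ofIsENat hξ)⟩

end Stmt14
end

section
/- Let ℬ be a rigid monoidal category and 𝓜 a left ℬ-module category. Then every lax ℬ-module functor F : 𝓜 → 𝓜 is automatically a (strong) ℬ-module functor: the lax structure morphism b ⊙ F(x) → F(b ⊙ x) has inverse given by F(b ⊙ x) → (b ⊗ bᴸ) ⊙ F(b ⊙ x) → b ⊙ F(bᴸ ⊙ (b ⊙ x)) → b ⊙ F(x), using the duality morphisms of b and the lax structure. -/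
/-!
STATEMENT 15: If `ℬ` is rigid and `𝓜` is a left `ℬ`-module category, then every lax
`ℬ`-module functor `F : 𝓜 ⥤ 𝓜` is a strong `ℬ`-module functor: each structure morphism
`α_{b,x} : b ⊙ F(x) ⟶ F(b ⊙ x)` is invertible, with inverse
`F(b⊙x) ⟶ (b ⊗ bᴸ) ⊙ F(b⊙x) ⟶ b ⊙ F(bᴸ ⊙ (b ⊙ x)) ⟶ b ⊙ F(x)` given by the duality
morphisms of `b` and the lax structure.  (Here `bᴸ` denotes the dual of `b` with
evaluation `bᴸ ⊗ b ⟶ 𝟙` and coevaluation `𝟙 ⟶ b ⊗ bᴸ`, i.e. Mathlib's right dual `bᘁ`.)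
-/

open CategoryTheory MonoidalCategory

namespace Stmt15

/-- A left module category over a monoidal category. -/
structure LeftModuleStruct (A : Type*) [Category A] [MonoidalCategory A]
    (L : Type*) [Category L] where
  act : A ⥤ L ⥤ L
  assoc : ∀ (a b : A) (x : L), (act.obj (a ⊗ b)).obj x ≅ (act.obj a).obj ((act.obj b).obj x)
  unitor : ∀ x : L, (act.obj (𝟙_ A)).obj x ≅ x
  assoc_natural :
    ∀ {a a' b b' : A} {x x' : L} (f : a ⟶ a') (g : b ⟶ b') (h : x ⟶ x'),
      (act.map (f ⊗ₘ g)).app x ≫ (act.obj (a' ⊗ b')).map h ≫ (assoc a' b' x').hom =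
        (assoc a b x).hom ≫ (act.map f).app _ ≫
          (act.obj a').map ((act.map g).app x ≫ (act.obj b').map h)
  unitor_natural : ∀ {x x' : L} (h : x ⟶ x'),
    (act.obj (𝟙_ A)).map h ≫ (unitor x').hom = (unitor x).hom ≫ h
  pentagon : ∀ (a b c : A) (x : L),
    (act.map (α_ a b c).hom).app x ≫ (assoc a (b ⊗ c) x).hom ≫
      (act.obj a).map (assoc b c x).hom =
    (assoc (a ⊗ b) c x).hom ≫ (assoc a b ((act.obj c).obj x)).hom
  triangle : ∀ (a : A) (x : L),
    (act.map (λ_ a).hom).app x = (assoc (𝟙_ A) a x).hom ≫ (unitor ((act.obj a).obj x)).hom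
  triangle' : ∀ (a : A) (x : L),
    (act.map (ρ_ a).hom).app x = (assoc a (𝟙_ A) x).hom ≫ (act.obj a).map (unitor x).hom

abbrev LeftModuleStruct.smul {A : Type*} [Category A] [MonoidalCategory A]
    {L : Type*} [Category L] (M : LeftModuleStruct A L) (a : A) (x : L) : L :=
  (M.act.obj a).obj x

variable {B : Type*} [Category B] [MonoidalCategory B] [RightRigidCategory B]
variable {M : Type*} [Category M]
variable (MB : LeftModuleStruct B M) (F : M ⥤ M)
variable (α : ∀ (b : B) (x : M), MB.smul b (F.obj x) ⟶ F.obj (MB.smul b x))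

/-- The candidate inverse of the lax structure morphism, built from the duality data. -/
noncomputable def laxInv (b : B) (x : M) : F.obj (MB.smul b x) ⟶ MB.smul b (F.obj x) :=
  (MB.unitor (F.obj (MB.smul b x))).inv ≫
    (MB.act.map (η_ b bᘁ)).app (F.obj (MB.smul b x)) ≫
    (MB.assoc b bᘁ (F.obj (MB.smul b x))).hom ≫
    (MB.act.obj b).map (α bᘁ (MB.smul b x)) ≫
    (MB.act.obj b).map (F.map ((MB.assoc bᘁ b x).inv)) ≫
    (MB.act.obj b).map (F.map ((MB.act.map (ε_ b bᘁ)).app x)) ≫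
    (MB.act.obj b).map (F.map (MB.unitor x).hom)

/-!
The candidate inverse of `α_{b,x}` is the mate of `α_{bᘁ,-}` under the adjunction
`bᘁ ⊙ - ⊣ b ⊙ -` induced by the duality of `b`. Composing it with `α_{b,x}` on either side,
naturality and the two lax coherences slide `α` past the unit and counit of this adjunction,
leaving its triangle identity, which is the action of the zigzag identity of `b`.
-/

namespace LeftModuleStruct

variable {A : Type*} [Category A] [MonoidalCategory A] {L : Type*} [Category L]
  (N : LeftModuleStruct A L)

lemma assoc_hom_naturality_left {a a' : A} (f : a ⟶ a') (b : A) (x : L) :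
    (N.act.map (f ▷ b)).app x ≫ (N.assoc a' b x).hom =
      (N.assoc a b x).hom ≫ (N.act.map f).app (N.smul b x) := by
  simpa using N.assoc_natural f (𝟙 b) (𝟙 x)

lemma assoc_hom_naturality_middle (a : A) {b b' : A} (g : b ⟶ b') (x : L) :
    (N.act.map (a ◁ g)).app x ≫ (N.assoc a b' x).hom =
      (N.assoc a b x).hom ≫ (N.act.obj a).map ((N.act.map g).app x) := by
  simpa using N.assoc_natural (𝟙 a) g (𝟙 x)

lemma assoc_hom_naturality_right (a b : A) {x x' : L} (h : x ⟶ x') :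
    (N.act.obj (a ⊗ b)).map h ≫ (N.assoc a b x').hom =
      (N.assoc a b x).hom ≫ (N.act.obj a).map ((N.act.obj b).map h) := by
  simpa using N.assoc_natural (𝟙 a) (𝟙 b) h

lemma unitor_inv_eq (a : A) (x : L) :
    (N.unitor (N.smul a x)).inv = (N.act.map (λ_ a).inv).app x ≫ (N.assoc (𝟙_ A) a x).hom := by
  rw [eq_comm, ← Iso.comp_hom_eq_id, Category.assoc, ← N.triangle, ← NatTrans.comp_app,
    ← Functor.map_comp, Iso.inv_hom_id, CategoryTheory.Functor.map_id, NatTrans.id_app]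

variable (b c : A) [ExactPairing b c]

def smulCoevaluation (y : L) : y ⟶ N.smul b (N.smul c y) :=
  (N.unitor y).inv ≫ (N.act.map (η_ b c)).app y ≫ (N.assoc b c y).hom

def smulEvaluation (x : L) : N.smul c (N.smul b x) ⟶ x :=
  (N.assoc c b x).inv ≫ (N.act.map (ε_ b c)).app x ≫ (N.unitor x).hom

lemma smulCoevaluation_naturality {y y' : L} (h : y ⟶ y') :
    h ≫ N.smulCoevaluation b c y' =
      N.smulCoevaluation b c y ≫ (N.act.obj b).map ((N.act.obj c).map h) := by
  have unitor_inv_naturality :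
      (N.unitor y).inv ≫ (N.act.obj (𝟙_ A)).map h = h ≫ (N.unitor y').inv := by
    rw [Iso.inv_comp_eq, ← Category.assoc, ← N.unitor_natural, Category.assoc, Iso.hom_inv_id,
      Category.comp_id]
  simp only [smulCoevaluation, Category.assoc]
  rw [← reassoc_of% unitor_inv_naturality, NatTrans.naturality_assoc,
    N.assoc_hom_naturality_right]

lemma smulCoevaluation_comp_map_smulEvaluation (x : L) :
    N.smulCoevaluation b c (N.smul b x) ≫ (N.act.obj b).map (N.smulEvaluation b c x) =
      𝟙 (N.smul b x) := by
  have pentagon_inv : (N.assoc (b ⊗ c) b x).hom ≫ (N.assoc b c (N.smul b x)).hom ≫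
      (N.act.obj b).map (N.assoc c b x).inv =
      (N.act.map (α_ b c b).hom).app x ≫ (N.assoc b (c ⊗ b) x).hom := by
    rw [← Category.assoc, ← N.pentagon]
    simp [← Functor.map_comp]
  suffices (N.act.map ((λ_ b).inv ≫ η_ b c ▷ b ≫ (α_ b c b).hom ≫ b ◁ ε_ b c ≫ (ρ_ b).hom)).app x =
      𝟙 (N.smul b x) by
    rw [← this, smulCoevaluation, smulEvaluation, N.unitor_inv_eq]
    simp only [Functor.map_comp, NatTrans.comp_app, Category.assoc, N.triangle']
    rw [reassoc_of% N.assoc_hom_naturality_middle, ← reassoc_of% pentagon_inv,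
      reassoc_of% N.assoc_hom_naturality_left]
  rw [ExactPairing.evaluation_coevaluation_assoc]
  simp

end LeftModuleStruct

section LaxModuleFunctor

variable {A : Type*} [Category A] [MonoidalCategory A] {L : Type*} [Category L]
  {N : LeftModuleStruct A L} {G : L ⥤ L}
  {φ : ∀ (a : A) (x : L), N.smul a (G.obj x) ⟶ G.obj (N.smul a x)}

variable (N G φ) in
structure IsLaxModuleFunctor : Prop where
  naturality : ∀ {a a' : A} (f : a ⟶ a') {x x' : L} (g : x ⟶ x'),
    (N.act.map f).app (G.obj x) ≫ (N.act.obj a').map (G.map g) ≫ φ a' x' =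
      φ a x ≫ G.map ((N.act.map f).app x ≫ (N.act.obj a').map g)
  assoc : ∀ (a b : A) (x : L),
    (N.assoc a b (G.obj x)).hom ≫ (N.act.obj a).map (φ b x) ≫ φ a (N.smul b x) =
      φ (a ⊗ b) x ≫ G.map (N.assoc a b x).hom
  unitor : ∀ x : L, φ (𝟙_ A) x ≫ G.map (N.unitor x).hom = (N.unitor (G.obj x)).hom

variable (N G φ) in
def laxInvOfExactPairing (b c : A) [ExactPairing b c] (x : L) :
    G.obj (N.smul b x) ⟶ N.smul b (G.obj x) :=
  N.smulCoevaluation b c (G.obj (N.smul b x)) ≫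
    (N.act.obj b).map (φ c (N.smul b x) ≫ G.map (N.smulEvaluation b c x))

namespace IsLaxModuleFunctor

lemma naturality_left (hF : IsLaxModuleFunctor N G φ) {a a' : A} (f : a ⟶ a') (x : L) :
    (N.act.map f).app (G.obj x) ≫ φ a' x = φ a x ≫ G.map ((N.act.map f).app x) := by
  simpa using hF.naturality f (𝟙 x)

lemma naturality_right (hF : IsLaxModuleFunctor N G φ) (a : A) {x x' : L} (g : x ⟶ x') :
    (N.act.obj a).map (G.map g) ≫ φ a x' = φ a x ≫ G.map ((N.act.obj a).map g) := by
  simpa using hF.naturality (𝟙 a) g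

lemma unitor_inv_comp (hF : IsLaxModuleFunctor N G φ) (x : L) :
    (N.unitor (G.obj x)).inv ≫ φ (𝟙_ A) x = G.map (N.unitor x).inv := by
  rw [Iso.inv_comp_eq, ← hF.unitor, Category.assoc, ← G.map_comp, Iso.hom_inv_id,
    CategoryTheory.Functor.map_id, Category.comp_id]

lemma map_comp_comp_map_assoc_inv (hF : IsLaxModuleFunctor N G φ) (a b : A) (x : L) :
    (N.act.obj a).map (φ b x) ≫ φ a (N.smul b x) ≫ G.map (N.assoc a b x).inv =
      (N.assoc a b (G.obj x)).inv ≫ φ (a ⊗ b) x := by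
  rw [Iso.eq_inv_comp, reassoc_of% hF.assoc, ← G.map_comp, Iso.hom_inv_id,
    CategoryTheory.Functor.map_id, Category.comp_id]

lemma comp_map_smulEvaluation (hF : IsLaxModuleFunctor N G φ) (b c : A) [ExactPairing b c]
    (x : L) :
    (N.act.obj c).map (φ b x) ≫ φ c (N.smul b x) ≫ G.map (N.smulEvaluation b c x) =
      N.smulEvaluation b c (G.obj x) := by
  rw [LeftModuleStruct.smulEvaluation, LeftModuleStruct.smulEvaluation, G.map_comp,
    reassoc_of% hF.map_comp_comp_map_assoc_inv, G.map_comp, ← reassoc_of% hF.naturality_left,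
    hF.unitor]

lemma comp_laxInvOfExactPairing (hF : IsLaxModuleFunctor N G φ) (b c : A) [ExactPairing b c]
    (x : L) : φ b x ≫ laxInvOfExactPairing N G φ b c x = 𝟙 (N.smul b (G.obj x)) := by
  rw [laxInvOfExactPairing, reassoc_of% N.smulCoevaluation_naturality b c (φ b x),
    ← Functor.map_comp, hF.comp_map_smulEvaluation, N.smulCoevaluation_comp_map_smulEvaluation]

lemma laxInvOfExactPairing_comp (hF : IsLaxModuleFunctor N G φ) (b c : A) [ExactPairing b c]
    (x : L) : laxInvOfExactPairing N G φ b c x ≫ φ b x = 𝟙 (G.obj (N.smul b x)) := by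
  have slide_unit : N.smulCoevaluation b c (G.obj (N.smul b x)) ≫
      (N.act.obj b).map (φ c (N.smul b x)) ≫ φ b (N.smul c (N.smul b x)) =
      G.map (N.smulCoevaluation b c (N.smul b x)) := by
    simp only [LeftModuleStruct.smulCoevaluation, G.map_comp, Category.assoc]
    rw [hF.assoc, reassoc_of% hF.naturality_left, reassoc_of% hF.unitor_inv_comp]
  rw [laxInvOfExactPairing, Functor.map_comp, Category.assoc, Category.assoc,
    hF.naturality_right, reassoc_of% slide_unit, ← G.map_comp,
    N.smulCoevaluation_comp_map_smulEvaluation, CategoryTheory.Functor.map_id]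

end IsLaxModuleFunctor

end LaxModuleFunctor

lemma laxInv_eq_laxInvOfExactPairing (b : B) (x : M) :
    laxInv MB F α b x = laxInvOfExactPairing MB F α b bᘁ x := by
  simp [laxInv, laxInvOfExactPairing, LeftModuleStruct.smulCoevaluation,
    LeftModuleStruct.smulEvaluation]

theorem lax_module_functor_is_strong
    -- `α` is natural ...
    (hnat : ∀ {b b' : B} (f : b ⟶ b') {x x' : M} (g : x ⟶ x'),
      (MB.act.map f).app (F.obj x) ≫ (MB.act.obj b').map (F.map g) ≫ α b' x' =
        α b x ≫ F.map ((MB.act.map f).app x ≫ (MB.act.obj b').map g))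
    -- ... and satisfies the lax module functor coherences
    (hassoc : ∀ (a b : B) (x : M),
      (MB.assoc a b (F.obj x)).hom ≫ (MB.act.obj a).map (α b x) ≫ α a (MB.smul b x) =
        α (a ⊗ b) x ≫ F.map (MB.assoc a b x).hom)
    (hunit : ∀ x : M,
      α (𝟙_ B) x ≫ F.map (MB.unitor x).hom = (MB.unitor (F.obj x)).hom) :
    -- then each `α_{b,x}` is invertible, with the stated inverse
    ∀ (b : B) (x : M),
      α b x ≫ laxInv MB F α b x = 𝟙 (MB.smul b (F.obj x)) ∧
      laxInv MB F α b x ≫ α b x = 𝟙 (F.obj (MB.smul b x)) := by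
  intro b x
  have hF : IsLaxModuleFunctor MB F α := ⟨hnat, hassoc, hunit⟩
  rw [laxInv_eq_laxInvOfExactPairing]
  exact ⟨hF.comp_laxInvOfExactPairing b bᘁ x, hF.laxInvOfExactPairing_comp b bᘁ x⟩

end Stmt15
end

section
/- Let 𝒞 be a braided monoidal category and 𝓜 a strongly unital monoidal left 𝒞-module (given by a braided monoidal functor φ : 𝒞̄ → Z₁(𝓜)) that is enriched in 𝒞̄, and suppose the canonical enriched monoidal category ᶜ𝓜 satisfies the existence condition for enriched half-braiding hom-objects. Then for objects (x,β̄_{−,x}), (y,β̄_{−,y}) of the enriched Drinfeld center, the hom-object [(x,β̄_{−,x}),(y,β̄_{−,y})] ∈ Z₂(𝒞) coincides with the internal hom in Z₂(𝒞) for the Müger centralizer Z₂(φ) of 𝒞̄ in Z₁(𝓜): there is a natural bijection between morphisms ζ : a → [x,y]_𝒞 (a ∈ Z₂(𝒞)) satisfying the equalizing condition and morphisms a ⊙ (x,β_{−,x}) → (y,β_{−,y}) in Z₂(φ). -/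
/-!
STATEMENT 18: Let `𝒞` be braided and `𝓜` a strongly unital monoidal left `𝒞`-module given
by a braided monoidal functor `φ : 𝒞̄ ⥤ Z₁(𝓜)`, enriched in `𝒞̄` via internal homs
`[x,y]_𝒞`.  For objects `(x,β̄_{−,x})`, `(y,β̄_{−,y})` of the enriched Drinfeld center of
the canonical construction, and `a ∈ Z₂(𝒞)`, there is a natural bijection between
morphisms `ζ : a ⟶ [x,y]_𝒞` satisfying the enriched equalizing condition and morphisms
`a ⊙ (x,β_{−,x}) ⟶ (y,β_{−,y})` in the Müger centralizer `Z₂(φ)` of `𝒞̄` in `Z₁(𝓜)`: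
`ζ` satisfies the equalizing condition iff its adjunct `φ(a)⊗x ⟶ y` commutes with the
half-braidings.
-/

open CategoryTheory MonoidalCategory BraidedCategory CategoryTheory.Functor.LaxMonoidal

namespace Stmt18

variable {C : Type*} [Category C] [MonoidalCategory C] [BraidedCategory C]
variable {M : Type*} [Category M] [MonoidalCategory M]

/-- Transparency in `𝒞` (membership in the Müger center `Z₂(𝒞)`). -/
def Transparent (a : C) : Prop :=
  ∀ u : C, (β_ a u).hom ≫ (β_ u a).hom = 𝟙 (a ⊗ u)

variable (φ : C ⥤ CategoryTheory.Center M)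

/-- The underlying action object `φ(a) ∈ 𝓜`. -/
noncomputable abbrev Iobj (a : C) : M := (φ.obj a).1

section

variable (H : M → M → C)
variable (e : ∀ (a : C) (x y : M), ((Iobj φ a ⊗ x) ⟶ y) ≃ (a ⟶ H x y))

/-- Evaluation `φ([x,y]) ⊗ x ⟶ y`. -/
noncomputable def evm (x y : M) : Iobj φ (H x y) ⊗ x ⟶ y := (e (H x y) x y).symm (𝟙 _)

/-- Postcomposition `[w,m] ⟶ [w,n]` with `g : m ⟶ n`. -/
noncomputable def Hpost (w : M) {m n : M} (g : m ⟶ n) : H w m ⟶ H w n :=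
  e (H w m) w n (evm φ H e w m ≫ g)

/-- Precomposition `[n,w] ⟶ [m,w]` with `g : m ⟶ n`. -/
noncomputable def Hpre (w : M) {m n : M} (g : m ⟶ n) : H n w ⟶ H m w :=
  e (H n w) m w ((_ ◁ g) ≫ evm φ H e n w)

/-- Enriched left whiskering `[x,y] ⟶ [z⊗x, z⊗y]`, using the half-braiding of `φ([x,y])`. -/
noncomputable def Lwhisk (x y z : M) : H x y ⟶ H (z ⊗ x) (z ⊗ y) :=
  e (H x y) (z ⊗ x) (z ⊗ y)
    ((α_ (Iobj φ (H x y)) z x).inv ≫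
      (((φ.obj (H x y)).2.β z).hom ▷ x) ≫
      (α_ z (Iobj φ (H x y)) x).hom ≫ (z ◁ evm φ H e x y))

/-- Enriched right whiskering `[x,y] ⟶ [x⊗z, y⊗z]`. -/
noncomputable def Rwhisk (x y z : M) : H x y ⟶ H (x ⊗ z) (y ⊗ z) :=
  e (H x y) (x ⊗ z) (y ⊗ z)
    ((α_ (Iobj φ (H x y)) x z).inv ≫ (evm φ H e x y ▷ z))

variable (X Y : CategoryTheory.Center M)

/-- First canonical morphism `[x,y] ⟶ [z⊗x, y⊗z]` of the enriched Drinfeld center. -/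
noncomputable def mor1C (z : M) : H X.1 Y.1 ⟶ H (z ⊗ X.1) (Y.1 ⊗ z) :=
  Lwhisk φ H e X.1 Y.1 z ≫ Hpost φ H e (z ⊗ X.1) (Y.2.β z).inv

/-- Second canonical morphism `[x,y] ⟶ [z⊗x, y⊗z]` of the enriched Drinfeld center. -/
noncomputable def mor2C (z : M) : H X.1 Y.1 ⟶ H (z ⊗ X.1) (Y.1 ⊗ z) :=
  Rwhisk φ H e X.1 Y.1 z ≫ Hpre φ H e (Y.1 ⊗ z) (X.2.β z).inv

/-- `t : φ(a) ⊗ x ⟶ y` is a morphism in the Müger centralizer `Z₂(φ)`: it commutes with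
the half-braidings of `φ(a)`, `x` and `y`. -/
def CentralCond (a : C) (t : Iobj φ a ⊗ X.1 ⟶ Y.1) : Prop :=
  ∀ z : M,
    (α_ z (Iobj φ a) X.1).inv ≫ (((φ.obj a).2.β z).inv ▷ X.1) ≫
        (α_ (Iobj φ a) z X.1).hom ≫ (Iobj φ a ◁ (X.2.β z).inv) ≫
        (α_ (Iobj φ a) X.1 z).inv ≫ (t ▷ z) =
      (z ◁ t) ≫ (Y.2.β z).inv

/-! Transposing along `e` turns both sides of the equalizing condition into morphisms
`z ⊗ x ⟶ y ⊗ z` of `𝓜`; naturality of `e` in the `𝒞`-variable computes these transposes, and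
they agree exactly when the centralizer square commutes, the two conditions differing only by
the invertible composite of associators and the half-braiding of `φ(a)`. -/

def HomEquivNaturalLeft : Prop :=
  ∀ {a a' : C} (f : a' ⟶ a) {x y : M} (g : Iobj φ a ⊗ x ⟶ y),
    e a' x y (((φ.map f).f ▷ x) ≫ g) = f ≫ e a x y g

section Adjunct

variable {φ H e X Y}

lemma symm_comp_of_homEquivNaturalLeft (nat : HomEquivNaturalLeft φ H e) {a a' : C}
    (f : a' ⟶ a) {x y : M} (ψ : a ⟶ H x y) :
    (e a' x y).symm (f ≫ ψ) = ((φ.map f).f ▷ x) ≫ (e a x y).symm ψ :=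
  (e a' x y).symm_apply_eq.mpr (by rw [nat, Equiv.apply_symm_apply])

lemma symm_eq_map_whiskerRight_comp_evm (nat : HomEquivNaturalLeft φ H e) {a : C} {x y : M}
    (ζ : a ⟶ H x y) : (e a x y).symm ζ = ((φ.map ζ).f ▷ x) ≫ evm φ H e x y := by
  rw [evm, ← symm_comp_of_homEquivNaturalLeft nat, Category.comp_id]

lemma symm_comp_Hpost (nat : HomEquivNaturalLeft φ H e) {a : C} {w m n : M} (ζ : a ⟶ H w m)
    (g : m ⟶ n) : (e a w n).symm (ζ ≫ Hpost φ H e w g) = (e a w m).symm ζ ≫ g := by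
  rw [symm_comp_of_homEquivNaturalLeft nat, Hpost, Equiv.symm_apply_apply,
    symm_eq_map_whiskerRight_comp_evm nat ζ, Category.assoc]

lemma symm_comp_Hpre (nat : HomEquivNaturalLeft φ H e) {a : C} {w m n : M} (ζ : a ⟶ H n w)
    (g : m ⟶ n) : (e a m w).symm (ζ ≫ Hpre φ H e w g) = (Iobj φ a ◁ g) ≫ (e a n w).symm ζ := by
  rw [symm_comp_of_homEquivNaturalLeft nat, Hpre, Equiv.symm_apply_apply,
    symm_eq_map_whiskerRight_comp_evm nat ζ, whisker_exchange_assoc]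

lemma symm_comp_Lwhisk (nat : HomEquivNaturalLeft φ H e) {a : C} {x y : M} (ζ : a ⟶ H x y)
    (z : M) : (e a (z ⊗ x) (z ⊗ y)).symm (ζ ≫ Lwhisk φ H e x y z) =
      (α_ (Iobj φ a) z x).inv ≫ (((φ.obj a).2.β z).hom ▷ x) ≫ (α_ z (Iobj φ a) x).hom ≫
        (z ◁ (e a x y).symm ζ) := by
  rw [symm_comp_of_homEquivNaturalLeft nat, Lwhisk, Equiv.symm_apply_apply,
    symm_eq_map_whiskerRight_comp_evm nat ζ, associator_inv_naturality_left_assoc,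
    ← comp_whiskerRight_assoc, (φ.map ζ).comm z]
  simp only [comp_whiskerRight, Category.assoc, associator_naturality_middle_assoc,
    MonoidalCategory.whiskerLeft_comp]

lemma symm_comp_Rwhisk (nat : HomEquivNaturalLeft φ H e) {a : C} {x y : M} (ζ : a ⟶ H x y)
    (z : M) : (e a (x ⊗ z) (y ⊗ z)).symm (ζ ≫ Rwhisk φ H e x y z) =
      (α_ (Iobj φ a) x z).inv ≫ ((e a x y).symm ζ ▷ z) := by
  rw [symm_comp_of_homEquivNaturalLeft nat, Rwhisk, Equiv.symm_apply_apply,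
    symm_eq_map_whiskerRight_comp_evm nat ζ, associator_inv_naturality_left_assoc,
    comp_whiskerRight]

lemma symm_comp_mor1C (nat : HomEquivNaturalLeft φ H e) {a : C} (ζ : a ⟶ H X.1 Y.1) (z : M) :
    (e a (z ⊗ X.1) (Y.1 ⊗ z)).symm (ζ ≫ mor1C φ H e X Y z) =
      (α_ (Iobj φ a) z X.1).inv ≫ (((φ.obj a).2.β z).hom ▷ X.1) ≫ (α_ z (Iobj φ a) X.1).hom ≫
        (z ◁ (e a X.1 Y.1).symm ζ) ≫ (Y.2.β z).inv := by
  rw [mor1C, ← Category.assoc, symm_comp_Hpost nat, symm_comp_Lwhisk nat]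
  simp only [Category.assoc]

lemma symm_comp_mor2C (nat : HomEquivNaturalLeft φ H e) {a : C} (ζ : a ⟶ H X.1 Y.1) (z : M) :
    (e a (z ⊗ X.1) (Y.1 ⊗ z)).symm (ζ ≫ mor2C φ H e X Y z) =
      (Iobj φ a ◁ (X.2.β z).inv) ≫ (α_ (Iobj φ a) X.1 z).inv ≫ ((e a X.1 Y.1).symm ζ ▷ z) := by
  rw [mor2C, ← Category.assoc, symm_comp_Hpre nat, symm_comp_Rwhisk nat]

end Adjunct

variable {φ X Y} in
lemma centralCond_iff {a : C} {t : Iobj φ a ⊗ X.1 ⟶ Y.1} :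
    CentralCond φ X Y a t ↔ ∀ z : M,
      (α_ (Iobj φ a) z X.1).inv ≫ (((φ.obj a).2.β z).hom ▷ X.1) ≫ (α_ z (Iobj φ a) X.1).hom ≫
          (z ◁ t) ≫ (Y.2.β z).inv =
        (Iobj φ a ◁ (X.2.β z).inv) ≫ (α_ (Iobj φ a) X.1 z).inv ≫ (t ▷ z) := by
  refine forall_congr' fun z => ⟨fun h => ?_, fun h => ?_⟩
  · simp only [← h, Iso.hom_inv_id_assoc, hom_inv_whiskerRight_assoc, Iso.inv_hom_id_assoc]
  · simp only [← h, Iso.hom_inv_id_assoc, inv_hom_whiskerRight_assoc, Iso.inv_hom_id_assoc]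

theorem enriched_center_hom_is_centralizer_hom
    -- naturality of the internal-hom adjunction in the `𝒞`-variable
    (nat : ∀ {a a' : C} (f : a' ⟶ a) {x y : M} (g : Iobj φ a ⊗ x ⟶ y),
      e a' x y (((φ.map f).f ▷ x) ≫ g) = f ≫ e a x y g)
    (a : C) :
    -- `ζ : a ⟶ [x,y]` equalizes the two canonical morphisms iff its adjunct
    -- `φ(a) ⊗ x ⟶ y` is a morphism in the Müger centralizer `Z₂(φ)`
    ∀ ζ : a ⟶ H X.1 Y.1,
      (∀ z : M, ζ ≫ mor1C φ H e X Y z = ζ ≫ mor2C φ H e X Y z) ↔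
        CentralCond φ X Y a ((e a X.1 Y.1).symm ζ) := by
  intro ζ
  rw [centralCond_iff]
  refine forall_congr' fun z => ?_
  rw [← (e a (z ⊗ X.1) (Y.1 ⊗ z)).symm.injective.eq_iff, symm_comp_mor1C nat,
    symm_comp_mor2C nat]

end

end Stmt18
end
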